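/- The partial fractal convolution operator P⁰₁ : L^p(I) → L^p(I), P⁰₁(b) = 0 *_T b (1 ≤ p ≤ ∞), satisfies ‖0 *_T b‖_p ≤ (Λ/(1−Λ))‖b‖_p for all b ∈ L^p(I). Moreover, if Λ < 1/2, then P⁰₁ is a contraction and its unique fixed point is the null function: if b ∈ L^p(I) satisfies 0 *_T b = b, then b = 0. -/

import Mathlib

open MeasureTheory ENNReal

noncomputable section

/-- The inverse of the increasing affine map `L n` sending `[x 0, x N]` onto
`[x n, x (n+1)]` (so `L n (x 0) = x n.castSucc` and `L n (x N) = x n.succ`). -/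
def Linv {N : ℕ} (x : Fin (N + 1) → ℝ) (n : Fin N) (y : ℝ) : ℝ :=
  x 0 + (y - x n.castSucc) * (x (Fin.last N) - x 0) / (x n.succ - x n.castSucc)

/-- The subinterval `I n` of the partition: `[x 0, x 1]` for `n = 0` and
`(x n, x (n+1)]` otherwise. -/
def subInt {N : ℕ} (x : Fin (N + 1) → ℝ) (n : Fin N) : Set ℝ :=
  if n.val = 0 then Set.Icc (x n.castSucc) (x n.succ)
  else Set.Ioc (x n.castSucc) (x n.succ)

/-- `h` is the image of `g` under the Read–Bajraktarević operator `T_{f,b}` with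
scale functions `α`, almost everywhere: on each `I n`,
`h = f + (α n ∘ Lₙ⁻¹) · ((g - b) ∘ Lₙ⁻¹)`. -/
def RBEq {N : ℕ} (μ : Measure ℝ) (x : Fin (N + 1) → ℝ) (α : Fin N → ℝ → ℝ)
    (f b g h : ℝ → ℝ) : Prop :=
  ∀ n : Fin N, ∀ᵐ t ∂μ, t ∈ subInt x n →
    h t = f t + α n (Linv x n t) * (g (Linv x n t) - b (Linv x n t))

/-- `h` satisfies the self-referential equation of `T_{f,b}`, i.e. `h` is a fixed
point of `T_{f,b}`; `h` is then the fractal convolution `f *_T b`. -/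
def SelfRef {N : ℕ} (μ : Measure ℝ) (x : Fin (N + 1) → ℝ) (α : Fin N → ℝ → ℝ)
    (f b h : ℝ → ℝ) : Prop :=
  RBEq μ x α f b h h

/-! On the piece `(x n, x (n+1)]` the null-seed equation reads
`h = (α n ∘ Lₙ⁻¹) · ((h - b) ∘ Lₙ⁻¹)`. The affine map `Lₙ⁻¹` carries that piece onto `I` and
pushes Lebesgue measure forward to `(x (n+1) - x n) / (x N - x 0)` times Lebesgue measure on `I`;
as these factors sum to one, adding up the pieces gives
`‖h‖_p ≤ Λ ‖h - b‖_p ≤ Λ (‖h‖_p + ‖b‖_p)`, which rearranges to the bound `Λ / (1 - Λ)`.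
The difference of two solutions solves the same equation with base `b - b'`, so `Λ / (1 - Λ)` is
also a Lipschitz constant; for `Λ < 1/2` it is `< 1`, and a fixed point then satisfies
`‖b‖ ≤ Λ / (1 - Λ) ‖b‖`, forcing `b = 0`. -/

open scoped Function

namespace MeasureTheory

/-- Abstracts the pieces `Iₙ` and the maps `Lₙ⁻¹` of the Read–Bajraktarević operator. -/
structure IsRescalingPartition {α ι : Type*} [MeasurableSpace α] [Fintype ι] (μ : Measure α)
    (S : ι → Set α) (φ : ι → α → α) (c : ι → ℝ≥0∞) : Prop where
  measurableSet : ∀ i, MeasurableSet (S i)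
  pairwise_disjoint : Pairwise (Disjoint on S)
  ae_mem_iUnion : ∀ᵐ t ∂μ, t ∈ ⋃ i, S i
  measurable : ∀ i, Measurable (φ i)
  map_restrict_le : ∀ i, (μ.restrict (S i)).map (φ i) ≤ c i • μ
  sum_le_one : ∑ i, c i ≤ 1

theorem Lp.ae_enorm_le {α E : Type*} [MeasurableSpace α] [NormedAddCommGroup E] {μ : Measure α}
    (f : Lp E ∞ μ) : ∀ᵐ u ∂μ, ‖f u‖ₑ ≤ ‖f‖ₑ := by
  simpa only [Lp.enorm_def, eLpNorm_exponent_top] using enorm_ae_le_eLpNormEssSup f μ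

namespace IsRescalingPartition

variable {α ι : Type*} [MeasurableSpace α] [Fintype ι] {μ : Measure α} {S : ι → Set α}
  {φ : ι → α → α} {c : ι → ℝ≥0∞}

theorem sum_restrict (hP : IsRescalingPartition μ S φ c) :
    Measure.sum (fun i => μ.restrict (S i)) = μ := by
  rw [← Measure.restrict_iUnion hP.pairwise_disjoint hP.measurableSet]
  exact Measure.restrict_eq_self_of_ae_mem hP.ae_mem_iUnion

theorem quasiMeasurePreserving (hP : IsRescalingPartition μ S φ c) (i : ι) :
    Measure.QuasiMeasurePreserving (φ i) (μ.restrict (S i)) μ :=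
  ⟨hP.measurable i, Measure.absolutelyContinuous_of_le_smul (hP.map_restrict_le i)⟩

theorem lintegral_le (hP : IsRescalingPartition μ S φ c) {F G : α → ℝ≥0∞} {K : ℝ≥0∞}
    (hG : AEMeasurable G μ) (hFG : ∀ i, ∀ᵐ t ∂μ.restrict (S i), F t ≤ K * G (φ i t)) :
    ∫⁻ t, F t ∂μ ≤ K * ∫⁻ t, G t ∂μ :=
  calc ∫⁻ t, F t ∂μ = ∑ i, ∫⁻ t in S i, F t ∂μ := by
        conv_lhs => rw [← hP.sum_restrict]
        rw [lintegral_sum_measure, tsum_fintype]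
    _ ≤ ∑ i, K * ∫⁻ t, G t ∂(μ.restrict (S i)).map (φ i) := by
        refine Finset.sum_le_sum fun i _ => ?_
        have hGφ : AEMeasurable (fun t => G (φ i t)) _ :=
          hG.comp_quasiMeasurePreserving (hP.quasiMeasurePreserving i)
        rw [lintegral_map' (hG.mono_ac (hP.quasiMeasurePreserving i).absolutelyContinuous)
          (hP.measurable i).aemeasurable, ← lintegral_const_mul'' K hGφ]
        exact lintegral_mono_ae (hFG i)
    _ ≤ ∑ i, K * (c i * ∫⁻ t, G t ∂μ) := by
        gcongr with i
        rw [← smul_eq_mul, ← lintegral_smul_measure]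
        exact lintegral_mono' (hP.map_restrict_le i) le_rfl
    _ = K * (∑ i, c i) * ∫⁻ t, G t ∂μ := by
        rw [Finset.mul_sum, Finset.sum_mul]; simp only [mul_assoc]
    _ ≤ K * ∫⁻ t, G t ∂μ := by
        grw [hP.sum_le_one, mul_one]

theorem essSup_le (hP : IsRescalingPartition μ S φ c) {F G : α → ℝ≥0∞} {K : ℝ≥0∞}
    (hFG : ∀ i, ∀ᵐ t ∂μ.restrict (S i), F t ≤ K * G (φ i t)) :
    essSup F μ ≤ K * essSup G μ := by
  have hF : ∀ᵐ t ∂Measure.sum fun i => μ.restrict (S i), F t ≤ K * essSup G μ :=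
    Measure.ae_sum_iff.2 fun i => by
      filter_upwards [hFG i, (hP.quasiMeasurePreserving i).ae (ae_le_essSup G)] with t hF hG
      exact hF.trans (by gcongr)
  rw [hP.sum_restrict] at hF
  exact essSup_le_of_ae_le _ hF

theorem eLpNorm_le {E F : Type*} [NormedAddCommGroup E] [NormedAddCommGroup F]
    (hP : IsRescalingPartition μ S φ c) {h : α → E} {g : α → F} {Λ : ℝ≥0∞}
    (hg : AEStronglyMeasurable g μ) (hhg : ∀ i, ∀ᵐ t ∂μ.restrict (S i), ‖h t‖ₑ ≤ Λ * ‖g (φ i t)‖ₑ)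
    (p : ℝ≥0∞) : eLpNorm h p μ ≤ Λ * eLpNorm g p μ := by
  rcases eq_or_ne p 0 with rfl | hp0
  · simp
  rcases eq_or_ne p ∞ with rfl | hptop
  · simpa only [eLpNorm_exponent_top, eLpNormEssSup] using hP.essSup_le hhg
  have hq : 0 < p.toReal := ENNReal.toReal_pos hp0 hptop
  simp only [eLpNorm_eq_lintegral_rpow_enorm_toReal hp0 hptop]
  have hint : ∫⁻ t, ‖h t‖ₑ ^ p.toReal ∂μ ≤ Λ ^ p.toReal * ∫⁻ t, ‖g t‖ₑ ^ p.toReal ∂μ := by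
    refine hP.lintegral_le (hg.enorm.pow_const _) fun i => ?_
    filter_upwards [hhg i] with t ht
    rw [← ENNReal.mul_rpow_of_nonneg _ _ hq.le]
    gcongr
  calc (∫⁻ t, ‖h t‖ₑ ^ p.toReal ∂μ) ^ (1 / p.toReal)
      ≤ (Λ ^ p.toReal * ∫⁻ t, ‖g t‖ₑ ^ p.toReal ∂μ) ^ (1 / p.toReal) := by gcongr
    _ = Λ * (∫⁻ t, ‖g t‖ₑ ^ p.toReal ∂μ) ^ (1 / p.toReal) := by
      rw [ENNReal.mul_rpow_of_nonneg _ _ (by positivity), one_div, ENNReal.rpow_rpow_inv hq.ne']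

end IsRescalingPartition
end MeasureTheory

theorem Fin.sum_succ_sub_castSucc {G : Type*} [AddCommGroup G] :
    ∀ {N : ℕ} (f : Fin (N + 1) → G), ∑ n : Fin N, (f n.succ - f n.castSucc) = f (Fin.last N) - f 0
  | 0, _ => by simp
  | N + 1, f => by
    rw [Fin.sum_univ_castSucc]
    simp only [Fin.succ_castSucc]
    rw [Fin.sum_succ_sub_castSucc (fun i => f i.castSucc), Fin.succ_last, Fin.castSucc_zero]
    abel

section Partition

open Set

variable {N : ℕ} {x : Fin (N + 1) → ℝ}

theorem iUnion_Ioc_castSucc_succ (hx : Monotone x) :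
    ⋃ n : Fin N, Ioc (x n.castSucc) (x n.succ) = Ioc (x 0) (x (Fin.last N)) := by
  rw [← hx.biUnion_Ico_Ioc_map_succ 0 (Fin.last N)]
  ext t
  simp only [mem_iUnion, mem_Ico, exists_prop]
  constructor
  · rintro ⟨n, ht⟩
    exact ⟨n.castSucc, ⟨Fin.zero_le _, n.castSucc_lt_last⟩, by simpa using ht⟩
  · rintro ⟨i, ⟨-, hi⟩, ht⟩
    obtain ⟨n, rfl⟩ := Fin.exists_castSucc_eq.2 hi.ne
    exact ⟨n, by simpa using ht⟩

theorem pairwise_disjoint_Ioc_castSucc_succ (hx : Monotone x) :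
    Pairwise (Disjoint on fun n : Fin N => Ioc (x n.castSucc) (x n.succ)) := by
  intro m n hmn
  simpa using hx.pairwise_disjoint_on_Ioc_succ ((Fin.castSucc_injective N).ne hmn)

theorem measurable_Linv (n : Fin N) : Measurable (Linv x n) := by
  unfold Linv; fun_prop

theorem map_Linv_volume (hx : StrictMono x) (n : Fin N) :
    volume.map (Linv x n)
      = ENNReal.ofReal ((x n.succ - x n.castSucc) / (x (Fin.last N) - x 0)) • volume := by
  have hlen : 0 < x n.succ - x n.castSucc := sub_pos.2 (hx n.castSucc_lt_succ)
  have htot : 0 < x (Fin.last N) - x 0 :=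
    sub_pos.2 (hx ((Fin.zero_le _).trans_lt (n.castSucc_lt_succ.trans_le (Fin.le_last _))))
  set r := (x (Fin.last N) - x 0) / (x n.succ - x n.castSucc)
  have hr : 0 < r := div_pos htot hlen
  have : Linv x n = (· + (x 0 - x n.castSucc * r)) ∘ (r * ·) := by
    ext t; simp only [r, Linv, Function.comp_apply]; field_simp; ring
  rw [this, ← Measure.map_map (by fun_prop) (by fun_prop), Real.map_volume_mul_left hr.ne',
    Measure.map_smul, map_add_right_eq_self, abs_of_pos (inv_pos.2 hr), inv_div]

theorem mapsTo_Linv (hx : StrictMono x) (n : Fin N) :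
    MapsTo (Linv x n) (Icc (x n.castSucc) (x n.succ)) (Icc (x 0) (x (Fin.last N))) := by
  rintro t ⟨hat, htb⟩
  have hlen : 0 < x n.succ - x n.castSucc := sub_pos.2 (hx n.castSucc_lt_succ)
  have htot : 0 ≤ x (Fin.last N) - x 0 := sub_nonneg.2 (hx.monotone (Fin.zero_le _))
  have hs0 : 0 ≤ (t - x n.castSucc) / (x n.succ - x n.castSucc) := by
    apply div_nonneg <;> linarith
  have hs1 : (t - x n.castSucc) / (x n.succ - x n.castSucc) ≤ 1 := by
    apply div_le_one_of_le₀ <;> linarith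
  have : Linv x n t
      = x 0 + (t - x n.castSucc) / (x n.succ - x n.castSucc) * (x (Fin.last N) - x 0) := by
    unfold Linv; ring
  rw [this]
  constructor <;> nlinarith

theorem map_restrict_Ioc_Linv_le (hx : StrictMono x) (n : Fin N) :
    (volume.restrict (Ioc (x n.castSucc) (x n.succ))).map (Linv x n)
      ≤ ENNReal.ofReal ((x n.succ - x n.castSucc) / (x (Fin.last N) - x 0))
        • volume.restrict (Icc (x 0) (x (Fin.last N))) :=
  calc _ ≤ (volume.restrict (Linv x n ⁻¹' Icc (x 0) (x (Fin.last N)))).map (Linv x n) :=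
        Measure.map_mono (Measure.restrict_mono (fun _ ht => mapsTo_Linv hx n
          (Ioc_subset_Icc_self ht)) le_rfl) (measurable_Linv n)
    _ = _ := by
        rw [← Measure.restrict_map (measurable_Linv n) measurableSet_Icc, map_Linv_volume hx n,
          Measure.restrict_smul]

/-- The first piece `I₁ = [x 0, x 1]` is replaced by `(x 0, x 1]`, which differs from it by a null
set. -/
theorem isRescalingPartition_Linv (hx : StrictMono x) :
    IsRescalingPartition (volume.restrict (Icc (x 0) (x (Fin.last N))))
      (fun n => Ioc (x n.castSucc) (x n.succ)) (Linv x)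
      (fun n => ENNReal.ofReal ((x n.succ - x n.castSucc) / (x (Fin.last N) - x 0))) where
  measurableSet _ := measurableSet_Ioc
  pairwise_disjoint := pairwise_disjoint_Ioc_castSucc_succ hx.monotone
  ae_mem_iUnion := by
    rw [iUnion_Ioc_castSucc_succ hx.monotone]
    filter_upwards [ae_restrict_mem measurableSet_Icc, Ioc_ae_eq_Icc.mem_iff] with t ht hIoc
    exact hIoc.2 ht
  measurable _ := measurable_Linv _
  map_restrict_le n := by
    rw [Measure.restrict_restrict_of_subset (Ioc_subset_Icc_self.trans
      (Icc_subset_Icc (hx.monotone (Fin.zero_le _)) (hx.monotone (Fin.le_last _))))]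
    exact map_restrict_Ioc_Linv_le hx n
  sum_le_one := by
    rw [← ENNReal.ofReal_sum_of_nonneg fun n _ => div_nonneg
      (sub_nonneg.2 (hx.monotone n.castSucc_le_succ)) (sub_nonneg.2 (hx.monotone (Fin.zero_le _))),
      ← Finset.sum_div, Fin.sum_succ_sub_castSucc]
    exact ENNReal.ofReal_le_one.2 (div_self_le_one _)

end Partition

theorem norm_le_div_one_sub_mul_of_norm_le_mul_norm_sub {E : Type*} [SeminormedAddGroup E]
    {u w : E} {Λ : ℝ} (hΛ0 : 0 ≤ Λ) (hΛ1 : Λ < 1) (h : ‖u‖ ≤ Λ * ‖u - w‖) :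
    ‖u‖ ≤ Λ / (1 - Λ) * ‖w‖ := by
  have := mul_le_mul_of_nonneg_left (norm_sub_le u w) hΛ0
  rw [div_mul_eq_mul_div, le_div_iff₀ (by linarith)]
  nlinarith

namespace RBEq

variable {N : ℕ} {x : Fin (N + 1) → ℝ} {μ : Measure ℝ} {α : Fin N → ℝ → ℝ}
  {f b g h f' b' g' h' : ℝ → ℝ}

theorem sub (H : RBEq μ x α f b g h) (H' : RBEq μ x α f' b' g' h') :
    RBEq μ x α (f - f') (b - b') (g - g') (h - h') := fun n => by
  filter_upwards [H n, H' n] with t ht ht' hmem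
  simp only [Pi.sub_apply, ht hmem, ht' hmem]
  ring

theorem zero_zero_sub_of_ae_eq_zero (hf : f =ᵐ[μ] 0) (H : RBEq μ x α f b g h) :
    RBEq μ x α 0 0 (g - b) h := fun n => by
  filter_upwards [H n, hf] with t ht hft hmem
  simp [ht hmem, hft]

end RBEq

section ZeroSeed

open Set

variable {N : ℕ} {x : Fin (N + 1) → ℝ} {α : Fin N → ℝ → ℝ} {g h : ℝ → ℝ}

theorem Ioc_subset_subInt (n : Fin N) : Ioc (x n.castSucc) (x n.succ) ⊆ subInt x n := by
  unfold subInt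
  split_ifs
  exacts [Ioc_subset_Icc_self, subset_rfl]

theorem eLpNorm_le_of_rbEq_zero (hx : StrictMono x) {Λ : ℝ≥0∞}
    (hα : ∀ n, ∀ᵐ u ∂volume.restrict (Icc (x 0) (x (Fin.last N))), ‖α n u‖ₑ ≤ Λ)
    (hg : AEStronglyMeasurable g (volume.restrict (Icc (x 0) (x (Fin.last N)))))
    (H : RBEq (volume.restrict (Icc (x 0) (x (Fin.last N)))) x α 0 0 g h) (p : ℝ≥0∞) :
    eLpNorm h p (volume.restrict (Icc (x 0) (x (Fin.last N))))
      ≤ Λ * eLpNorm g p (volume.restrict (Icc (x 0) (x (Fin.last N)))) := by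
  have hP := isRescalingPartition_Linv hx
  refine hP.eLpNorm_le hg (fun n => ?_) p
  filter_upwards [ae_restrict_of_ae (H n), ae_restrict_mem measurableSet_Ioc,
    (hP.quasiMeasurePreserving n).ae (hα n)] with t ht hmem hαt
  rw [ht (Ioc_subset_subInt n hmem)]
  simp only [Pi.zero_apply, zero_add, sub_zero, enorm_mul]
  gcongr

theorem norm_le_mul_norm_of_rbEq_zero (hx : StrictMono x) {p : ℝ≥0∞} [Fact (1 ≤ p)]
    {Λ : ℝ} (hΛ : 0 ≤ Λ)
    (hα : ∀ n, ∀ᵐ u ∂volume.restrict (Icc (x 0) (x (Fin.last N))), ‖α n u‖ₑ ≤ ENNReal.ofReal Λ)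
    {u v : Lp ℝ p (volume.restrict (Icc (x 0) (x (Fin.last N))))}
    (hh : h =ᵐ[volume.restrict (Icc (x 0) (x (Fin.last N)))] u)
    (hg : g =ᵐ[volume.restrict (Icc (x 0) (x (Fin.last N)))] v)
    (H : RBEq (volume.restrict (Icc (x 0) (x (Fin.last N)))) x α 0 0 g h) :
    ‖u‖ ≤ Λ * ‖v‖ := by
  have := eLpNorm_le_of_rbEq_zero hx hα ((Lp.aestronglyMeasurable v).congr hg.symm) H p
  rw [eLpNorm_congr_ae hh, eLpNorm_congr_ae hg, ← Lp.enorm_def, ← Lp.enorm_def,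
    ← ofReal_norm, ← ofReal_norm, ← ENNReal.ofReal_mul hΛ] at this
  exact (ENNReal.ofReal_le_ofReal_iff (by positivity)).1 this

end ZeroSeed

theorem partial_convolution_null_seed_bound_and_fixed_point_general
    (N : ℕ) (x : Fin (N + 1) → ℝ) (hx : StrictMono x)
    (μ : Measure ℝ) (hμ : μ = volume.restrict (Set.Icc (x 0) (x (Fin.last N))))
    (p : ℝ≥0∞) [Fact (1 ≤ p)]
    (α : Fin N → Lp ℝ ∞ μ)
    (Λ : ℝ) (hΛdef : Λ = ⨆ n : Fin N, ‖α n‖) (hΛ : Λ < 1)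
    (P₁ : Lp ℝ p μ → Lp ℝ p μ)
    (hP₁ : ∀ b : Lp ℝ p μ, SelfRef μ x (fun n => ⇑(α n)) ⇑(0 : Lp ℝ p μ) ⇑b ⇑(P₁ b)) :
    (∀ b : Lp ℝ p μ, ‖P₁ b‖ ≤ Λ / (1 - Λ) * ‖b‖) ∧
    (Λ < 1 / 2 →
      Λ / (1 - Λ) < 1 ∧
      (∀ b b' : Lp ℝ p μ, ‖P₁ b - P₁ b'‖ ≤ Λ / (1 - Λ) * ‖b - b'‖) ∧
      (∀ b : Lp ℝ p μ, P₁ b = b → b = 0)) := by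
  subst hμ
  have hΛ0 : 0 ≤ Λ := hΛdef ▸ Real.iSup_nonneg fun n => norm_nonneg _
  have hαΛ : ∀ n, ‖α n‖ ≤ Λ := fun n =>
    hΛdef ▸ le_ciSup (Set.finite_range fun n => ‖α n‖).bddAbove n
  have hα : ∀ n, ∀ᵐ u ∂volume.restrict (Set.Icc (x 0) (x (Fin.last N))),
      ‖α n u‖ₑ ≤ ENNReal.ofReal Λ := fun n => by
    filter_upwards [Lp.ae_enorm_le (α n)] with u hu
    exact hu.trans (ofReal_norm (α n) ▸ ENNReal.ofReal_le_ofReal (hαΛ n))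
  have hbound : ∀ b, ‖P₁ b‖ ≤ Λ / (1 - Λ) * ‖b‖ := fun b =>
    norm_le_div_one_sub_mul_of_norm_le_mul_norm_sub hΛ0 hΛ <|
      norm_le_mul_norm_of_rbEq_zero hx hΛ0 hα .rfl (Lp.coeFn_sub _ _).symm <|
        (hP₁ b).zero_zero_sub_of_ae_eq_zero (Lp.coeFn_zero _ _ _)
  have hlip : ∀ b b', ‖P₁ b - P₁ b'‖ ≤ Λ / (1 - Λ) * ‖b - b'‖ := fun b b' =>
    norm_le_div_one_sub_mul_of_norm_le_mul_norm_sub hΛ0 hΛ <|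
      norm_le_mul_norm_of_rbEq_zero hx hΛ0 hα (Lp.coeFn_sub _ _).symm
        (((Lp.coeFn_sub _ _).sub (Lp.coeFn_sub _ _)).symm.trans (Lp.coeFn_sub _ _).symm) <|
        ((hP₁ b).sub (hP₁ b')).zero_zero_sub_of_ae_eq_zero (by simp)
  refine ⟨hbound, fun hΛ2 => ?_⟩
  have hk : Λ / (1 - Λ) < 1 := (div_lt_one (by linarith)).2 (by linarith)
  refine ⟨hk, hlip, fun b hb => norm_le_zero_iff.1 ?_⟩
  nlinarith [hb ▸ hbound b, norm_nonneg b]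

/-- The operator `P⁰₁ b = 0 *_T b` satisfies
`‖0 *_T b‖_p ≤ (Λ/(1−Λ))‖b‖_p`; moreover, if `Λ < 1/2` then `P⁰₁` is a contraction
and its unique fixed point is the null function. -/
theorem partial_convolution_null_seed_bound_and_fixed_point
    (N : ℕ) (hN : 2 ≤ N) (x : Fin (N + 1) → ℝ) (hx : StrictMono x)
    (μ : Measure ℝ) (hμ : μ = volume.restrict (Set.Icc (x 0) (x (Fin.last N))))
    (p : ℝ≥0∞) [Fact (1 ≤ p)]
    (α : Fin N → Lp ℝ ∞ μ)
    (Λ : ℝ) (hΛdef : Λ = ⨆ n : Fin N, ‖α n‖) (hΛ : Λ < 1)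
    (P₁ : Lp ℝ p μ → Lp ℝ p μ)
    (hP₁ : ∀ b : Lp ℝ p μ, SelfRef μ x (fun n => ⇑(α n)) ⇑(0 : Lp ℝ p μ) ⇑b ⇑(P₁ b)) :
    (∀ b : Lp ℝ p μ, ‖P₁ b‖ ≤ Λ / (1 - Λ) * ‖b‖) ∧
    (Λ < 1 / 2 →
      Λ / (1 - Λ) < 1 ∧
      (∀ b b' : Lp ℝ p μ, ‖P₁ b - P₁ b'‖ ≤ Λ / (1 - Λ) * ‖b - b'‖) ∧
      (∀ b : Lp ℝ p μ, P₁ b = b → b = 0)) :=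
  partial_convolution_null_seed_bound_and_fixed_point_general N x hx μ hμ p α Λ hΛdef hΛ P₁ hP₁
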